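/- Let G be a digraphic bidirected graph, let α ∈ {+, −}, and let H be a circular component of G. Then the family { S ∈ P(G; α) : S ⊆ V(H) } of equivalence classes of ∼_α contained in V(H) coincides with { V(H) }; that is, any two vertices of the same circular component of a digraphic bidirected graph are ∼_α-equivalent. -/

import Mathlib

/-- A bidirected graph on vertex type `V` with edge type `E`: each edge `e` has two
designated ends, `fst e` and `snd e`, and each end carries a sign
(`true` = `+`, `false` = `-`). -/
structure BidirGraph (V : Type*) (E : Type*) where
  fst : E → V
  snd : E → V
  sgnFst : E → Bool
  sgnSnd : E → Bool

namespace BidirGraph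

variable {V E : Type*} (G : BidirGraph V E)

/-- A step is an edge together with a direction of traversal
(`true` = from `fst` to `snd`). -/
def stepTail (s : E × Bool) : V := if s.2 then G.fst s.1 else G.snd s.1

def stepHead (s : E × Bool) : V := if s.2 then G.snd s.1 else G.fst s.1

/-- The sign of the start vertex of a step over its edge. -/
def stepTailSign (s : E × Bool) : Bool := if s.2 then G.sgnFst s.1 else G.sgnSnd s.1

/-- The sign of the end vertex of a step over its edge. -/
def stepHeadSign (s : E × Bool) : Bool := if s.2 then G.sgnSnd s.1 else G.sgnFst s.1

/-- `L` is a walk from `u` to `v`. -/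
def IsWalk (u v : V) (L : List (E × Bool)) : Prop :=
  List.Chain' (fun s t => G.stepHead s = G.stepTail t) L ∧
  (L = [] → u = v) ∧
  (∀ s, L.head? = some s → G.stepTail s = u) ∧
  (∀ s, L.getLast? = some s → G.stepHead s = v)

/-- A ditrail: a walk with pairwise distinct edges in which, at every internal vertex,
the signs over the preceding and the succeeding edges are distinct. -/
def IsDitrail (u v : V) (L : List (E × Bool)) : Prop :=
  G.IsWalk u v L ∧ (L.map Prod.fst).Nodup ∧
  List.Chain' (fun s t => G.stepHeadSign s ≠ G.stepTailSign t) L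

/-- An `(α, β)`-ditrail from `u` to `v`: a ditrail with at least one edge that starts
with sign `α` and ends with sign `β`; a trivial (edgeless) ditrail counts as an
`(α, β)`-ditrail whenever `α ≠ β`. -/
def IsABDitrail (α β : Bool) (u v : V) (L : List (E × Bool)) : Prop :=
  G.IsDitrail u v L ∧
  ((L = [] ∧ α ≠ β) ∨
   (L ≠ [] ∧ (∀ s, L.head? = some s → G.stepTailSign s = α) ∧
    (∀ s, L.getLast? = some s → G.stepHeadSign s = β)))

/-- An edge is circular if some cyclic ditrail (a closed `(α, -α)`-ditrail) contains it. -/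
def IsCircular (e : E) : Prop :=
  ∃ (v : V) (α : Bool) (L : List (E × Bool)),
    G.IsABDitrail α (!α) v v L ∧ ∃ d : Bool, (e, d) ∈ L

/-- Two vertices are circularly connected if some path (a walk without repeated
vertices) between them uses only circular edges. -/
def CircConn (u v : V) : Prop :=
  ∃ L : List (E × Bool), G.IsWalk u v L ∧ (u :: L.map G.stepHead).Nodup ∧
    ∀ p ∈ L, G.IsCircular p.1

/-- A bidirected graph is circularly connected if every two vertices are
circularly connected. -/
def CircularlyConnected : Prop := ∀ u v : V, G.CircConn u v

/-- The vertex set of a circular component: an equivalence class of circular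
connectivity. -/
def IsCircComponent (C : Set V) : Prop := ∃ v : V, C = {u | G.CircConn u v}

/-- The relation `∼_α`: `u ∼_α v` iff `u = v`, or `u` and `v` are circularly connected
and there is no `(α, α)`-ditrail between them. -/
def SimRel (α : Bool) (u v : V) : Prop :=
  u = v ∨ (G.CircConn u v ∧
    ¬ ∃ L : List (E × Bool), G.IsABDitrail α α u v L ∨ G.IsABDitrail α α v u L)

/-- A bidirected graph is digraphic if for every edge the two ends carry distinct
signs, i.e., exactly one end has sign `+` and the other has sign `-`. -/
def IsDigraphic : Prop := ∀ e : E, G.sgnFst e ≠ G.sgnSnd e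

/-- A dipath: a ditrail in which no vertex occurs more than once. -/
def IsDipath (u v : V) (L : List (E × Bool)) : Prop :=
  G.IsDitrail u v L ∧ (u :: L.map G.stepHead).Nodup

/-- Two vertices of a digraphic bidirected graph are strongly connected if there are
`(-, +)`-ditrails from `u` to `v` and from `v` to `u`. -/
def StronglyConn (u v : V) : Prop :=
  (∃ L, G.IsABDitrail false true u v L) ∧ (∃ L, G.IsABDitrail false true v u L)

end BidirGraph

/-!
In a digraphic graph every edge has one end `+` and one end `-`, so along a ditrail the sign
with which each edge is left never changes; the last vertex is therefore entered with the
opposite of the first sign, and no `(α, α)`-ditrail exists. Hence `∼_α` is plain circular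
connectivity, an equivalence relation whose classes are exactly the circular components.
-/

theorem Equivalence.classes_subset_class_eq_singleton {α : Type*} {r : α → α → Prop}
    (hr : Equivalence r) (v₀ : α) :
    {S : Set α | (∃ v, S = {u | r u v}) ∧ S ⊆ {u | r u v₀}} = {{u | r u v₀}} := by
  ext S
  simp only [Set.mem_ofPred_eq, Set.mem_singleton_iff]
  constructor
  · rintro ⟨⟨v, rfl⟩, hsub⟩
    have hv : r v v₀ := hsub (hr.refl v)
    ext u
    exact ⟨fun hu => hr.trans hu hv, fun hu => hr.trans hu (hr.symm hv)⟩
  · rintro rfl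
    exact ⟨⟨v₀, rfl⟩, subset_rfl⟩

namespace BidirGraph

variable {V E : Type*} (G : BidirGraph V E)

section Walks

variable {G} {u v : V} {s : E × Bool} {L : List (E × Bool)}

@[simp]
theorem isWalk_nil : G.IsWalk u v [] ↔ u = v := by
  simp [IsWalk, List.Chain']

@[simp]
theorem isWalk_cons :
    G.IsWalk u v (s :: L) ↔ G.stepTail s = u ∧ G.IsWalk (G.stepHead s) v L := by
  cases L with
  | nil => simp [IsWalk, List.Chain', eq_comm]
  | cons t L =>
    simp only [IsWalk, List.Chain', List.isChain_cons_cons, List.head?_cons,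
      List.getLast?_cons_cons, Option.some.injEq, forall_eq', reduceCtorEq, false_implies, true_and]
    tauto

end Walks

def CircAdj (u w : V) : Prop :=
  ∃ s : E × Bool, G.IsCircular s.1 ∧ G.stepTail s = u ∧ G.stepHead s = w

section CircConn

variable {G} {u v w : V} {L : List (E × Bool)}

instance : Std.Symm G.CircAdj where
  symm _ _ := fun ⟨⟨e, d⟩, hs, ht, hh⟩ =>
    ⟨(e, !d), hs, by cases d <;> simpa [stepTail, stepHead] using hh,
      by cases d <;> simpa [stepTail, stepHead] using ht⟩

theorem reflTransGen_circAdj_of_isWalk (h : G.IsWalk u v L) (hL : ∀ p ∈ L, G.IsCircular p.1) :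
    Relation.ReflTransGen G.CircAdj u v := by
  induction L generalizing u with
  | nil => exact (isWalk_nil.1 h).symm ▸ .refl
  | cons s L ih =>
    obtain ⟨rfl, hw⟩ := isWalk_cons.1 h
    exact .head ⟨s, hL s (List.mem_cons_self ..), rfl, rfl⟩
      (ih hw fun p hp => hL p (List.mem_cons_of_mem s hp))

theorem circConn_of_mem_path (h : G.IsWalk w v L) (hnd : (w :: L.map G.stepHead).Nodup)
    (hL : ∀ p ∈ L, G.IsCircular p.1) (hu : u ∈ w :: L.map G.stepHead) : G.CircConn u v := by
  induction L generalizing w with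
  | nil =>
    obtain rfl := List.mem_singleton.1 hu
    exact ⟨[], h, hnd, hL⟩
  | cons s L ih =>
    rcases List.mem_cons.1 hu with rfl | hu
    · exact ⟨s :: L, h, hnd, hL⟩
    · exact ih (isWalk_cons.1 h).2 (List.nodup_cons.1 hnd).2
        (fun p hp => hL p (List.mem_cons_of_mem s hp)) hu

theorem circConn_iff_reflTransGen : G.CircConn u v ↔ Relation.ReflTransGen G.CircAdj u v := by
  refine ⟨fun ⟨L, h, _, hL⟩ => reflTransGen_circAdj_of_isWalk h hL, fun h => ?_⟩
  induction h using Relation.ReflTransGen.head_induction_on with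
  | refl => exact ⟨[], isWalk_nil.2 rfl, List.nodup_singleton v, by simp⟩
  | @head u w huw _ ih =>
    obtain ⟨s, hs, rfl, rfl⟩ := huw
    obtain ⟨L, h, hnd, hL⟩ := ih
    -- prepending `s` must not repeat a vertex; if it would, shortcut to the later occurrence
    by_cases hmem : G.stepTail s ∈ G.stepHead s :: L.map G.stepHead
    · exact circConn_of_mem_path h hnd hL hmem
    · refine ⟨s :: L, isWalk_cons.2 ⟨rfl, h⟩, List.nodup_cons.2 ⟨hmem, hnd⟩, ?_⟩
      intro p hp
      rcases List.mem_cons.1 hp with rfl | hp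
      exacts [hs, hL p hp]

variable (G) in
theorem equivalence_circConn : Equivalence G.CircConn := by
  rw [show G.CircConn = Relation.ReflTransGen G.CircAdj from
    funext₂ fun _ _ => propext circConn_iff_reflTransGen]
  exact ⟨fun _ => .refl, fun h => Std.Symm.symm _ _ h, .trans⟩

end CircConn

namespace IsDigraphic

variable {G} (hG : G.IsDigraphic) {α : Bool} {u v : V} {L : List (E × Bool)}
include hG

theorem stepHeadSign_eq : ∀ s : E × Bool, G.stepHeadSign s = !G.stepTailSign s
  | (e, true) => Bool.eq_not.2 (hG e).symm
  | (e, false) => Bool.eq_not.2 (hG e)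

theorem stepTailSign_eq_of_chain {a t : E × Bool}
    (hc : List.IsChain (fun s t => G.stepHeadSign s ≠ G.stepTailSign t) (a :: L))
    (ht : t ∈ a :: L) : G.stepTailSign t = G.stepTailSign a := by
  have hc' : List.IsChain (· = ·) ((a :: L).map G.stepTailSign) := by
    refine (List.isChain_map _).2 (hc.imp fun s t hst => ?_)
    simpa [hG.stepHeadSign_eq] using hst
  rw [List.map_cons, List.isChain_cons_eq_iff_eq_replicate] at hc'
  rcases List.mem_cons.1 ht with rfl | ht
  · rfl
  · exact List.eq_of_mem_replicate (hc' ▸ List.mem_map_of_mem ht)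

theorem not_isABDitrail_self : ¬ G.IsABDitrail α α u v L := by
  rintro ⟨⟨-, -, hc⟩, ⟨-, hne⟩ | ⟨hne, hhead, hlast⟩⟩
  · exact hne rfl
  obtain ⟨a, L, rfl⟩ := List.exists_cons_of_ne_nil hne
  obtain ⟨t, ht⟩ := Option.isSome_iff_exists.1 (List.getLast?_isSome.2 hne)
  have := hlast t ht
  rw [hG.stepHeadSign_eq, hG.stepTailSign_eq_of_chain hc (List.mem_of_getLast? ht),
    hhead a rfl] at this
  simp at this

theorem simRel_iff : G.SimRel α u v ↔ G.CircConn u v := by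
  refine ⟨?_, fun h => .inr ⟨h, ?_⟩⟩
  · rintro (rfl | ⟨h, -⟩)
    exacts [(equivalence_circConn G).refl u, h]
  · rintro ⟨L, hL | hL⟩ <;> exact hG.not_isABDitrail_self hL

end IsDigraphic

end BidirGraph

/-- If `G` is digraphic and `C` is the vertex set of a circular
component, then the family of `∼_α`-classes contained in `C` coincides with `{C}`;
that is, any two vertices of the same circular component are `∼_α`-equivalent. -/
theorem digraphic_simRel_classes_trivial {V E : Type*} (G : BidirGraph V E)
    (hG : G.IsDigraphic) (α : Bool) (C : Set V) (hC : G.IsCircComponent C) :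
    {S : Set V | (∃ v : V, S = {u | G.SimRel α u v}) ∧ S ⊆ C} = {C} ∧
    ∀ u ∈ C, ∀ v ∈ C, G.SimRel α u v := by
  obtain ⟨v₀, rfl⟩ := hC
  have hsim : G.SimRel α = G.CircConn := funext₂ fun _ _ => propext hG.simRel_iff
  have hequiv := G.equivalence_circConn
  rw [hsim]
  exact ⟨hequiv.classes_subset_class_eq_singleton v₀,
    fun u hu v hv => hequiv.trans hu (hequiv.symm hv)⟩
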